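/- arXiv:2605.21570 — 2 statements merged into one kernel-verified Lean document; each statement's English description precedes it below -/
import Mathlib

section
/- Let d ≥ 1, let 0 = A₀ < A₁ ≤ A₂ ≤ ... ≤ A_d be real numbers, and let B_i be real numbers with 0 ≤ B_i ≤ A_i − A_{i−1} for all 1 ≤ i ≤ d. Then (A₁ − Σ_{i=1}^d B_i)/A₁ ≤ (A₁ − B₁)/(A₁ + Σ_{i=2}^d B_i) ≤ ∏_{i=1}^d (A_i − B_i)/A_i ≤ (A_d − Σ_{i=1}^d B_i)/A_d ≤ (A_d − B₁)/(A_d + Σ_{i=2}^d B_i). -/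
/-!
The two outer inequalities are elementary. The two inner ones follow by induction on `d`,
multiplying by the next factor `(A' - c) / A'` with `c = B (n + 1)` and `A' = A (n + 1)`:
it turns the lower bound `x / y` into at least `x / (y + c)` because `y + c ≤ A'`
(the gap conditions `B i ≤ A i - A (i - 1)` telescope), and the upper bound
`(A n - s) / A n` into at most `(A' - (s + c)) / A'` because `c ≤ A' - A n`.
-/

open Finset

lemma sub_add_div_le_sub_div_add {a b s : ℝ} (ha : 0 < a) (hb : 0 ≤ b) (hs : 0 ≤ s) :
    (a - (b + s)) / a ≤ (a - b) / (a + s) := by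
  rw [div_le_div_iff₀ ha (by linarith)]
  nlinarith [mul_nonneg hs (add_nonneg hb hs)]

lemma div_add_le_div_mul_sub_div {x y c a : ℝ} (hx : 0 ≤ x) (hy : 0 < y) (hc : 0 ≤ c)
    (ha : y + c ≤ a) : x / (y + c) ≤ x / y * ((a - c) / a) := by
  rw [div_mul_div_comm, div_le_div_iff₀ (by linarith) (by nlinarith)]
  nlinarith [mul_nonneg (mul_nonneg hx hc) (sub_nonneg.2 ha)]

lemma sub_div_mul_sub_div_le {s c a a' : ℝ} (hs : 0 ≤ s) (ha : 0 < a) (ha' : 0 < a')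
    (hc : c ≤ a' - a) : (a - s) / a * ((a' - c) / a') ≤ (a' - (s + c)) / a' := by
  rw [div_mul_div_comm, div_le_div_iff₀ (mul_pos ha ha') ha']
  nlinarith [mul_nonneg (mul_nonneg hs (by linarith : 0 ≤ a' - a - c)) ha'.le]

section AlmostTelescopic

variable {A B : ℕ → ℝ}

lemma add_sum_Icc_two_le {k : ℕ} (hk : 1 ≤ k)
    (hB : ∀ i, 1 ≤ i → i ≤ k → B i ≤ A i - A (i - 1)) :
    A 1 + ∑ i ∈ Icc 2 k, B i ≤ A k := by
  induction k, hk using Nat.le_induction with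
  | base => simp
  | succ n hn ih =>
    have hgap : B (n + 1) ≤ A (n + 1) - A n := by simpa using hB (n + 1) (by omega) le_rfl
    rw [sum_Icc_succ_top (by omega)]
    linarith [ih fun i h1 h2 => hB i h1 (by omega)]

lemma pos_of_gap {k : ℕ} (hk : 1 ≤ k) (hA1 : 0 < A 1)
    (hB0 : ∀ i, 1 ≤ i → i ≤ k → 0 ≤ B i)
    (hB : ∀ i, 1 ≤ i → i ≤ k → B i ≤ A i - A (i - 1)) : 0 < A k := by
  have hsum : 0 ≤ ∑ i ∈ Icc 2 k, B i :=
    sum_nonneg fun i hi => hB0 i (by grind) (mem_Icc.1 hi).2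
  linarith [add_sum_Icc_two_le hk hB]

lemma sub_div_add_sum_le_prod {k : ℕ} (hk : 1 ≤ k) (hA0 : 0 ≤ A 0) (hA1 : 0 < A 1)
    (hB0 : ∀ i, 1 ≤ i → i ≤ k → 0 ≤ B i)
    (hB : ∀ i, 1 ≤ i → i ≤ k → B i ≤ A i - A (i - 1)) :
    (A 1 - B 1) / (A 1 + ∑ i ∈ Icc 2 k, B i) ≤ ∏ i ∈ Icc 1 k, (A i - B i) / A i := by
  induction k, hk using Nat.le_induction with
  | base => simp
  | succ n hn ih =>
    have hB0' : ∀ i, 1 ≤ i → i ≤ n → 0 ≤ B i := fun i h1 h2 => hB0 i h1 (by omega)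
    have hB' : ∀ i, 1 ≤ i → i ≤ n → B i ≤ A i - A (i - 1) :=
      fun i h1 h2 => hB i h1 (by omega)
    have hgap : B (n + 1) ≤ A (n + 1) - A n := by simpa using hB (n + 1) (by omega) le_rfl
    have hAn := pos_of_gap hn hA1 hB0' hB'
    have hAn1 := pos_of_gap (by omega) hA1 hB0 hB
    have hB1 : 0 ≤ A 1 - B 1 := by linarith [hB 1 le_rfl (by omega)]
    have hsum : 0 ≤ ∑ i ∈ Icc 2 n, B i :=
      sum_nonneg fun i hi => hB0' i (by grind) (mem_Icc.1 hi).2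
    have htel := add_sum_Icc_two_le (by omega) hB
    rw [sum_Icc_succ_top (by omega)] at htel ⊢
    rw [prod_Icc_succ_top (by omega), ← add_assoc]
    calc (A 1 - B 1) / (A 1 + ∑ i ∈ Icc 2 n, B i + B (n + 1))
        ≤ (A 1 - B 1) / (A 1 + ∑ i ∈ Icc 2 n, B i) * ((A (n + 1) - B (n + 1)) / A (n + 1)) :=
          div_add_le_div_mul_sub_div hB1 (by linarith) (hB0 _ (by omega) le_rfl)
            (by linarith)
      _ ≤ _ := mul_le_mul_of_nonneg_right (ih hB0' hB') (div_nonneg (by linarith) hAn1.le)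

lemma prod_le_sub_sum_div {k : ℕ} (hk : 1 ≤ k) (hA1 : 0 < A 1)
    (hB0 : ∀ i, 1 ≤ i → i ≤ k → 0 ≤ B i)
    (hB : ∀ i, 1 ≤ i → i ≤ k → B i ≤ A i - A (i - 1)) :
    ∏ i ∈ Icc 1 k, (A i - B i) / A i ≤ (A k - ∑ i ∈ Icc 1 k, B i) / A k := by
  induction k, hk using Nat.le_induction with
  | base => simp
  | succ n hn ih =>
    have hB0' : ∀ i, 1 ≤ i → i ≤ n → 0 ≤ B i := fun i h1 h2 => hB0 i h1 (by omega)
    have hB' : ∀ i, 1 ≤ i → i ≤ n → B i ≤ A i - A (i - 1) :=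
      fun i h1 h2 => hB i h1 (by omega)
    have hgap : B (n + 1) ≤ A (n + 1) - A n := by simpa using hB (n + 1) (by omega) le_rfl
    have hAn := pos_of_gap hn hA1 hB0' hB'
    have hAn1 := pos_of_gap (by omega) hA1 hB0 hB
    have hsum : 0 ≤ ∑ i ∈ Icc 1 n, B i :=
      sum_nonneg fun i hi => hB0' i (mem_Icc.1 hi).1 (mem_Icc.1 hi).2
    rw [prod_Icc_succ_top (by omega), sum_Icc_succ_top (by omega)]
    calc (∏ i ∈ Icc 1 n, (A i - B i) / A i) * ((A (n + 1) - B (n + 1)) / A (n + 1))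
        ≤ (A n - ∑ i ∈ Icc 1 n, B i) / A n * ((A (n + 1) - B (n + 1)) / A (n + 1)) :=
          mul_le_mul_of_nonneg_right (ih hB0' hB') (div_nonneg (by linarith) hAn1.le)
      _ ≤ _ := sub_div_mul_sub_div_le hsum hAn hAn1 hgap

end AlmostTelescopic

theorem stmt_1_general (d : ℕ) (hd : 1 ≤ d) (A B : ℕ → ℝ)
    (hA0 : A 0 = 0) (hA01 : A 0 < A 1)
    (hB0 : ∀ i, 1 ≤ i → i ≤ d → 0 ≤ B i)
    (hB1 : ∀ i, 1 ≤ i → i ≤ d → B i ≤ A i - A (i - 1)) :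
    (A 1 - ∑ i ∈ Finset.Icc 1 d, B i) / A 1
      ≤ (A 1 - B 1) / (A 1 + ∑ i ∈ Finset.Icc 2 d, B i) ∧
    (A 1 - B 1) / (A 1 + ∑ i ∈ Finset.Icc 2 d, B i)
      ≤ ∏ i ∈ Finset.Icc 1 d, (A i - B i) / A i ∧
    (∏ i ∈ Finset.Icc 1 d, (A i - B i) / A i)
      ≤ (A d - ∑ i ∈ Finset.Icc 1 d, B i) / A d ∧
    (A d - ∑ i ∈ Finset.Icc 1 d, B i) / A d
      ≤ (A d - B 1) / (A d + ∑ i ∈ Finset.Icc 2 d, B i) := by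
  have hA1 : 0 < A 1 := hA0 ▸ hA01
  have hsplit : ∑ i ∈ Icc 1 d, B i = B 1 + ∑ i ∈ Icc 2 d, B i :=
    (add_sum_Ioc_eq_sum_Icc hd).symm
  have hB1nn := hB0 1 le_rfl hd
  have hsum : 0 ≤ ∑ i ∈ Icc 2 d, B i :=
    sum_nonneg fun i hi => hB0 i (by grind) (mem_Icc.1 hi).2
  refine ⟨?_, sub_div_add_sum_le_prod hd hA0.ge hA1 hB0 hB1,
    prod_le_sub_sum_div hd hA1 hB0 hB1, ?_⟩
  · rw [hsplit]
    exact sub_add_div_le_sub_div_add hA1 hB1nn hsum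
  · rw [hsplit]
    exact sub_add_div_le_sub_div_add (pos_of_gap hd hA1 hB0 hB1) hB1nn hsum

/-- Bounds for almost-telescopic products. -/
theorem stmt_1 (d : ℕ) (hd : 1 ≤ d) (A B : ℕ → ℝ)
    (hA0 : A 0 = 0) (hA01 : A 0 < A 1)
    (hAmono : ∀ i, 1 ≤ i → i < d → A i ≤ A (i + 1))
    (hB0 : ∀ i, 1 ≤ i → i ≤ d → 0 ≤ B i)
    (hB1 : ∀ i, 1 ≤ i → i ≤ d → B i ≤ A i - A (i - 1)) :
    (A 1 - ∑ i ∈ Finset.Icc 1 d, B i) / A 1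
      ≤ (A 1 - B 1) / (A 1 + ∑ i ∈ Finset.Icc 2 d, B i) ∧
    (A 1 - B 1) / (A 1 + ∑ i ∈ Finset.Icc 2 d, B i)
      ≤ ∏ i ∈ Finset.Icc 1 d, (A i - B i) / A i ∧
    (∏ i ∈ Finset.Icc 1 d, (A i - B i) / A i)
      ≤ (A d - ∑ i ∈ Finset.Icc 1 d, B i) / A d ∧
    (A d - ∑ i ∈ Finset.Icc 1 d, B i) / A d
      ≤ (A d - B 1) / (A d + ∑ i ∈ Finset.Icc 2 d, B i) :=
  stmt_1_general d hd A B hA0 hA01 hB0 hB1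
end

section
/- Let r_1, ..., r_m ∈ [0,1) and let X_1, ..., X_m be independent geometric random variables where X_i takes value x ∈ ℤ_{≥0} with probability (1−r_i) r_i^x. Set X = Σ_i X_i and a_i = r_i/(1−r_i). Then for every nonnegative integer M, the expectation of the falling factorial satisfies E[X(X−1)···(X−M+1)] = Σ_{(m_1,...,m_m): Σ m_i = M} (M choose m_1,...,m_m) ∏_i m_i! a_i^{m_i} ≤ M! (Σ_i a_i)^M. -/
/-!
Since `n (n-1) ⋯ (n-M+1) = M! · C(n, M)` and, by Vandermonde's identity,
`C(∑ xᵢ, M) = ∑_{∑ fᵢ = M} ∏ C(xᵢ, fᵢ)`, the moment splits into products of one-variable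
expectations `E[C(Xᵢ, k)] = aᵢ^k` (a negative binomial series). Thus the moment equals
`M! ∑_{∑ fᵢ = M} ∏ aᵢ^{fᵢ}`, and the bound is the multinomial theorem together with
`multinomial ≥ 1`.
-/

open Finset
open scoped Nat

lemma prod_range_natCast_sub_eq_descFactorial {R : Type*} [CommRing R] (n M : ℕ) :
    ∏ j ∈ range M, ((n : R) - j) = n.descFactorial M := by
  rw [← descPochhammer_eval_eq_prod_range, descPochhammer_eval_eq_descFactorial]

lemma Nat.choose_sum_eq_sum_piAntidiag {ι : Type*} [DecidableEq ι] (s : Finset ι) (x : ι → ℕ)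
    (M : ℕ) :
    (∑ i ∈ s, x i).choose M = ∑ f ∈ s.piAntidiag M, ∏ i ∈ s, (x i).choose (f i) := by
  induction s using Finset.cons_induction generalizing M with
  | empty => rcases M with _ | M <;> simp
  | cons a s ha ih =>
    rw [sum_cons, Nat.add_choose_eq, piAntidiag_cons ha, sum_disjiUnion]
    refine sum_congr rfl fun p _ => ?_
    rw [sum_map, ih p.2, mul_sum]
    refine sum_congr rfl fun f hf => ?_
    have hfa : f a = 0 := by_contra fun hne => ha ((mem_piAntidiag.1 hf).2 a hne)
    rw [prod_cons]
    simp only [addRightEmbedding_apply, Pi.add_apply, hfa, zero_add]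
    congr 1
    refine prod_congr rfl fun i hi => ?_
    have hia : i ≠ a := fun h => ha (h ▸ hi)
    simp [hia]

lemma prod_range_sum_natCast_sub_eq_sum_piAntidiag {R ι : Type*} [CommRing R] [DecidableEq ι]
    (s : Finset ι) (x : ι → ℕ) (M : ℕ) :
    ∏ j ∈ range M, ((∑ i ∈ s, (x i : R)) - j)
      = M ! * ∑ f ∈ s.piAntidiag M, ∏ i ∈ s, ((x i).choose (f i) : R) := by
  rw [← Nat.cast_sum, prod_range_natCast_sub_eq_descFactorial,
    Nat.descFactorial_eq_factorial_mul_choose, Nat.choose_sum_eq_sum_piAntidiag]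
  push_cast
  rfl

lemma Nat.multinomial_mul_prod_factorial_of_mem_piAntidiag {ι : Type*} [DecidableEq ι]
    {s : Finset ι} {M : ℕ} {f : ι → ℕ} (hf : f ∈ s.piAntidiag M) :
    Nat.multinomial s f * ∏ i ∈ s, (f i)! = M ! := by
  rw [mul_comm, Nat.multinomial_spec, (mem_piAntidiag.1 hf).1]

lemma hasSum_geometric_mul_choose {r : ℝ} (h0 : 0 ≤ r) (h1 : r < 1) (k : ℕ) :
    HasSum (fun n : ℕ => (1 - r) * r ^ n * (n.choose k : ℝ)) ((r / (1 - r)) ^ k) := by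
  have hr : 1 - r ≠ 0 := by linarith
  have hshift : HasSum (fun n : ℕ => (1 - r) * r ^ (n + k) * ((n + k).choose k : ℝ))
      ((r / (1 - r)) ^ k) := by
    convert (hasSum_choose_mul_geometric_of_norm_lt_one k
      (by rwa [Real.norm_of_nonneg h0])).mul_left (r ^ k * (1 - r)) using 2 with n
    · rfl
    · rw [pow_add]; ring
    · rw [div_pow, pow_succ]; field_simp
  have hhead : ∑ n ∈ range k, (1 - r) * r ^ n * (n.choose k : ℝ) = 0 :=
    sum_eq_zero fun n hn => by simp [Nat.choose_eq_zero_of_lt (mem_range.1 hn)]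
  refine (hasSum_nat_add_iff' k).1 ?_
  rwa [hhead, sub_zero]

lemma hasSum_fin_pi_prod_of_nonneg {β : Type*} :
    ∀ {m : ℕ} {g : Fin m → β → ℝ} {S : Fin m → ℝ}, (∀ i b, 0 ≤ g i b) →
      (∀ i, HasSum (g i) (S i)) → HasSum (fun x : Fin m → β => ∏ i, g i (x i)) (∏ i, S i)
  | 0, _, _, _, _ => by simp
  | m + 1, g, S, hg, hS => by
    have htail := hasSum_fin_pi_prod_of_nonneg (fun i => hg i.succ) (fun i => hS i.succ)
    have hsummable := Summable.mul_of_nonneg (hS 0).summable htail.summable (hg 0)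
      fun x => prod_nonneg fun i _ => hg i.succ (x i)
    refine (Fin.consEquiv fun _ => β).hasSum_iff.mp ?_
    simpa [Fin.consEquiv, Fin.prod_univ_succ, Function.comp_def] using
      (hS 0).mul htail hsummable

lemma hasSum_fin_pi_prod_geometric_mul_choose {m : ℕ} {r : Fin m → ℝ} (hr0 : ∀ i, 0 ≤ r i)
    (hr1 : ∀ i, r i < 1) (f : Fin m → ℕ) :
    HasSum (fun x : Fin m → ℕ => ∏ i, (1 - r i) * r i ^ x i * ((x i).choose (f i) : ℝ))
      (∏ i, (r i / (1 - r i)) ^ f i) := by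
  have hnonneg : ∀ i (n : ℕ), 0 ≤ (1 - r i) * r i ^ n * (n.choose (f i) : ℝ) := fun i n => by
    have := hr0 i; have := hr1 i
    positivity
  -- `(· :)`: unifying with the goal before `g` is known sends higher-order unification astray
  exact (hasSum_fin_pi_prod_of_nonneg hnonneg
    fun i => hasSum_geometric_mul_choose (hr0 i) (hr1 i) (f i) :)

/-- Falling-factorial moments of a sum of independent geometric random variables:
exact multinomial formula and the upper bound `M! (Σ a_i)^M` with `a_i = r_i/(1-r_i)`. -/
theorem stmt_6 (m : ℕ) (r : Fin m → ℝ) (hr0 : ∀ i, 0 ≤ r i) (hr1 : ∀ i, r i < 1)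
    (M : ℕ) :
    (∑' x : Fin m → ℕ,
        (∏ i, (1 - r i) * r i ^ (x i)) * ∏ j ∈ Finset.range M, ((∑ i, (x i : ℝ)) - (j : ℝ)))
      = ∑ f ∈ Finset.Nat.antidiagonalTuple m M,
          (Nat.multinomial Finset.univ f : ℝ) *
            ∏ i, (Nat.factorial (f i) : ℝ) * (r i / (1 - r i)) ^ (f i) ∧
    (∑ f ∈ Finset.Nat.antidiagonalTuple m M,
        (Nat.multinomial Finset.univ f : ℝ) *
          ∏ i, (Nat.factorial (f i) : ℝ) * (r i / (1 - r i)) ^ (f i))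
      ≤ (Nat.factorial M : ℝ) * (∑ i, r i / (1 - r i)) ^ M := by
  rw [← piAntidiag_univ_fin_eq_antidiagonalTuple]
  have hterm : ∀ f ∈ (univ : Finset (Fin m)).piAntidiag M,
      (Nat.multinomial univ f : ℝ) * ∏ i, ((f i)! : ℝ) * (r i / (1 - r i)) ^ f i
        = M ! * ∏ i, (r i / (1 - r i)) ^ f i := fun f hf => by
    rw [prod_mul_distrib, ← mul_assoc, ← Nat.cast_prod, ← Nat.cast_mul,
      Nat.multinomial_mul_prod_factorial_of_mem_piAntidiag hf]
  have hexpand : ∀ x : Fin m → ℕ,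
      (∏ i, (1 - r i) * r i ^ x i) * ∏ j ∈ range M, ((∑ i, (x i : ℝ)) - j)
        = ∑ f ∈ univ.piAntidiag M,
            (M ! : ℝ) * ∏ i, (1 - r i) * r i ^ x i * ((x i).choose (f i) : ℝ) := by
    intro x
    rw [prod_range_sum_natCast_sub_eq_sum_piAntidiag, mul_sum, mul_sum]
    refine sum_congr rfl fun f _ => ?_
    simp only [prod_mul_distrib]
    ring
  have hmoment : HasSum
      (fun x : Fin m → ℕ => (∏ i, (1 - r i) * r i ^ x i) * ∏ j ∈ range M, ((∑ i, (x i : ℝ)) - j))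
      (∑ f ∈ univ.piAntidiag M, M ! * ∏ i, (r i / (1 - r i)) ^ f i) := by
    simp_rw [hexpand]
    exact hasSum_sum fun f _ => (hasSum_fin_pi_prod_geometric_mul_choose hr0 hr1 f).mul_left _
  refine ⟨by rw [hmoment.tsum_eq, sum_congr rfl hterm], ?_⟩
  rw [sum_congr rfl hterm, sum_pow_eq_sum_piAntidiag, mul_sum]
  gcongr with f
  refine le_mul_of_one_le_left (prod_nonneg fun i _ => ?_) (mod_cast Nat.multinomial_pos _ _)
  have := hr0 i; have := hr1 i
  positivity
end
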